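/- Fix constants k₀ ≥ 4 and C₀ ≥ 1000 and let E ⊂ ℝ² be finite. There is a universal constant C such that the following holds. Let Q ∈ Λ₀ satisfy δ_Q < 1 and E ∩ 2Q = ∅ (i.e., Q ∈ Λ_empty), and let Q' ∈ Λ^♯ be any square containing some point of 2Q⁺ ∩ E (such Q' exists, since Q⁺ ∉ Λ₀ forces 2Q⁺ ∩ E ≠ ∅). Then: (A) 5Q ∩ Q' ≠ ∅; and (B) δ_{Q'} ≤ Cδ_Q, and consequently |x − x'| ≤ Cδ_Q for all x ∈ Q and x' ∈ Q'. -/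

import Mathlib

open Set Real Pointwise

noncomputable section

abbrev E2 := EuclideanSpace ℝ (Fin 2)

/-- Partial derivative in coordinate direction `i`. -/
noncomputable def pd (i : Fin 2) (F : E2 → ℝ) : E2 → ℝ :=
  fun x => fderiv ℝ F x (EuclideanSpace.single i 1)

/-- Iterated partial derivative `∂^α` for a multi-index `α = (α₁, α₂)`. -/
noncomputable def Dmul (α : ℕ × ℕ) (F : E2 → ℝ) : E2 → ℝ :=
  (pd 0)^[α.1] ((pd 1)^[α.2] F)

/-- The multi-indices `α` with `|α| ≤ 2`. -/
def multiIdx2 : Finset (ℕ × ℕ) :=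
  (Finset.range 3 ×ˢ Finset.range 3).filter (fun α => α.1 + α.2 ≤ 2)

/-- `(Σ_{|α| ≤ 2} |∂^α F (x)|²)^{1/2}`. -/
noncomputable def C2sum (F : E2 → ℝ) (x : E2) : ℝ :=
  Real.sqrt (∑ α ∈ multiIdx2, (Dmul α F x) ^ 2)

/-- `‖F‖_{C²(ℝ²)} ≤ M`. -/
def C2NormLE (F : E2 → ℝ) (M : ℝ) : Prop := ∀ x, C2sum F x ≤ M

/-- `f ∈ C²₊(E)`: `f` is the restriction to `E` of a nonnegative `C²` function of finite norm. -/
def MemC2plusTrace (E : Set E2) (f : E2 → ℝ) : Prop :=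
  ∃ F : E2 → ℝ, ContDiff ℝ 2 F ∧ (∀ x, 0 ≤ F x) ∧ (∀ x ∈ E, F x = f x) ∧ ∃ M, C2NormLE F M

/-- The trace norm `‖f‖_{C²₊(E)}`. -/
noncomputable def traceNormPlus (E : Set E2) (f : E2 → ℝ) : ℝ :=
  sInf { M | ∃ F : E2 → ℝ, ContDiff ℝ 2 F ∧ (∀ x, 0 ≤ F x) ∧ (∀ x ∈ E, F x = f x) ∧
    C2NormLE F M }

/-- The one-jet `𝒥_x F`, as an affine function on `ℝ²`. -/
noncomputable def jet (F : E2 → ℝ) (x : E2) : E2 → ℝ :=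
  fun y => F x + fderiv ℝ F x (y - x)

/-- The (half-open) square with center `c` and sidelength `δ`. -/
def sqC (c : E2) (δ : ℝ) : Set E2 :=
  {x | ∀ i : Fin 2, c i - δ / 2 ≤ x i ∧ x i < c i + δ / 2}

/-- `σ(x, S)`. -/
def sigmaSet (x : E2) (S : Set E2) : Set (E2 → ℝ) :=
  { P | ∃ φ : E2 → ℝ, ContDiff ℝ 2 φ ∧ (∀ z ∈ S, φ z = 0) ∧ C2NormLE φ 1 ∧ P = jet φ x }

/-- `σ^♯(x, k)`. -/
def sigmaSharp (E : Set E2) (x : E2) (k : ℕ) : Set (E2 → ℝ) :=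
  { P | ∀ S : Set E2, S ⊆ E → S.ncard ≤ k → P ∈ sigmaSet x S }

/-- `Γ₊(x, S, M)` (for the data `f`). -/
def GammaPlus (f : E2 → ℝ) (x : E2) (S : Set E2) (M : ℝ) : Set (E2 → ℝ) :=
  { P | ∃ F : E2 → ℝ, ContDiff ℝ 2 F ∧ (∀ y, 0 ≤ F y) ∧ (∀ z ∈ S, F z = f z) ∧
      C2NormLE F M ∧ P = jet F x }

/-- `Γ₊^♯(x, k, M)` (for `f` given on `E`). -/
def GammaSharp (E : Set E2) (f : E2 → ℝ) (x : E2) (k : ℕ) (M : ℝ) : Set (E2 → ℝ) :=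
  { P | ∀ S : Set E2, S ⊆ E → S.ncard ≤ k → P ∈ GammaPlus f x S M }

/-- `ℬ(x, δ) = {P : |∂^α P(x)| ≤ δ^{2-|α|} for |α| ≤ 1}`. -/
def jetBall (x : E2) (δ : ℝ) : Set (E2 → ℝ) :=
  { P | |P x| ≤ δ ^ 2 ∧ ∀ i : Fin 2, |fderiv ℝ P x (EuclideanSpace.single i 1)| ≤ δ }

/-- `|P|_{ℛ_x}`. -/
noncomputable def jetNormAt (x : E2) (P : E2 → ℝ) : ℝ :=
  Real.sqrt ((P x) ^ 2 + ‖fderiv ℝ P x‖ ^ 2)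

/-- diameter of a set of jets with respect to `|·|_{ℛ_x}`. -/
noncomputable def jetDiam (x : E2) (A : Set (E2 → ℝ)) : ℝ :=
  sSup { r | ∃ P ∈ A, ∃ P' ∈ A, r = jetNormAt x (P - P') }

noncomputable def vec2 (a b : ℝ) : E2 := (WithLp.equiv 2 (Fin 2 → ℝ)).symm ![a, b]

/-- A dyadic square is encoded by a triple `q = (i, j, k)`,
corresponding to `[2^k i, 2^k (i+1)) × [2^k j, 2^k (j+1))`; its sidelength is `2^k`. -/
noncomputable def dyadicLen (q : ℤ × ℤ × ℤ) : ℝ := (2 : ℝ) ^ q.2.2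

noncomputable def dyadicCenter (q : ℤ × ℤ × ℤ) : E2 :=
  vec2 ((2 : ℝ) ^ q.2.2 * ((q.1 : ℝ) + 1 / 2)) ((2 : ℝ) ^ q.2.2 * ((q.2.1 : ℝ) + 1 / 2))

noncomputable def dyadicSq (q : ℤ × ℤ × ℤ) : Set E2 := sqC (dyadicCenter q) (dyadicLen q)

/-- The concentric dilate `λQ` of the dyadic square `q`. -/
noncomputable def dilate (q : ℤ × ℤ × ℤ) (lam : ℝ) : Set E2 :=
  sqC (dyadicCenter q) (lam * dyadicLen q)

/-- The dyadic parent `Q⁺`. -/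
def dyadicParent (q : ℤ × ℤ × ℤ) : ℤ × ℤ × ℤ := (Int.fdiv q.1 2, Int.fdiv q.2.1 2, q.2.2 + 1)

/-- Membership in the Calderón–Zygmund collection `Λ₀`. -/
def memLambda0 (E : Set E2) (k₀ : ℕ) (C₀ : ℝ) (q : ℤ × ℤ × ℤ) : Prop :=
  dyadicLen q ≤ 1 ∧
  (∀ x ∈ dilate q 2, C₀ * dyadicLen q ≤ jetDiam x (sigmaSharp E x k₀)) ∧
  (∃ y ∈ dilate (dyadicParent q) 2, jetDiam y (sigmaSharp E y k₀) < 2 * C₀ * dyadicLen q)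

def Lambda0 (E : Set E2) (k₀ : ℕ) (C₀ : ℝ) : Set (ℤ × ℤ × ℤ) := { q | memLambda0 E k₀ C₀ q }

def LambdaSharp (E : Set E2) (k₀ : ℕ) (C₀ : ℝ) : Set (ℤ × ℤ × ℤ) :=
  { q | q ∈ Lambda0 E k₀ C₀ ∧ (E ∩ dilate q 2).Nonempty }

/-! The set `2Q⁺` lies in `5Q`, and it contains both a point `z` of `E ∩ Q'` and a point `x̂`
where `diam σ^♯(x̂, k₀) < 2C₀δ_Q`. If `δ_{Q'} ≥ 8δ_Q`, the square `Q'`, which meets `2Q⁺` at `z`,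
is large enough for `2Q'` to swallow `2Q⁺`; then `x̂ ∈ 2Q'` and the lower bound defining
`Q' ∈ Λ₀` gives `C₀δ_{Q'} < 2C₀δ_Q`, a contradiction. So `δ_{Q'} < 8δ_Q`, and the distance
bound follows by going from `Q` to `Q'` through `z`. -/

section Squares

variable {c c' x y z : E2} {d d' : ℝ}

lemma abs_sub_center_le_of_mem_sqC (hx : x ∈ sqC c d) (i : Fin 2) : |x i - c i| ≤ d / 2 :=
  abs_le.mpr ⟨by linarith [(hx i).1], by linarith [(hx i).2]⟩

lemma abs_sub_lt_of_mem_sqC (hx : x ∈ sqC c d) (hy : y ∈ sqC c d) (i : Fin 2) :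
    |x i - y i| < d :=
  abs_lt.mpr ⟨by linarith [(hx i).1, (hy i).2], by linarith [(hx i).2, (hy i).1]⟩

lemma sqC_subset_sqC (h : ∀ i, |c i - c' i| + d / 2 ≤ d' / 2) : sqC c d ⊆ sqC c' d' := by
  intro x hx i
  have hlo := neg_abs_le (c i - c' i)
  have hhi := le_abs_self (c i - c' i)
  exact ⟨by linarith [(hx i).1, h i], by linarith [(hx i).2, h i]⟩

lemma sqC_subset_sqC_two_mul_of_mem (hz : z ∈ sqC c d) (hz' : z ∈ sqC c' d') (hd : 2 * d ≤ d') :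
    sqC c d ⊆ sqC c' (2 * d') := by
  refine sqC_subset_sqC fun i => ?_
  have hcz := abs_sub_center_le_of_mem_sqC hz i
  have hzc' := abs_sub_center_le_of_mem_sqC hz' i
  linarith [abs_sub_le (c i) (z i) (c' i), abs_sub_comm (z i) (c i)]

end Squares

lemma dist_le_two_mul_of_forall_abs_sub_le {x y : E2} {r : ℝ} (h : ∀ i, |x i - y i| ≤ r) :
    dist x y ≤ 2 * r := by
  have hr : 0 ≤ r := (abs_nonneg _).trans (h 0)
  have hsq : ∀ i, dist (x i) (y i) ^ 2 ≤ r ^ 2 := fun i => by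
    rw [Real.dist_eq]; exact pow_le_pow_left₀ (abs_nonneg _) (h i) 2
  rw [EuclideanSpace.dist_eq, Fin.sum_univ_two, ← Real.sqrt_sq (by positivity : 0 ≤ 2 * r)]
  exact Real.sqrt_le_sqrt (by nlinarith [hsq 0, hsq 1])

lemma dyadicLen_pos (q : ℤ × ℤ × ℤ) : 0 < dyadicLen q := by
  unfold dyadicLen; positivity

lemma dyadicLen_dyadicParent (q : ℤ × ℤ × ℤ) : dyadicLen (dyadicParent q) = 2 * dyadicLen q := by
  rw [dyadicLen, dyadicLen, dyadicParent, zpow_add_one₀ two_ne_zero, mul_comm]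

lemma abs_fdiv_two_center_sub_le (k n : ℤ) :
    |(2 : ℝ) ^ (k + 1) * ((n.fdiv 2 : ℝ) + 1 / 2) - 2 ^ k * ((n : ℝ) + 1 / 2)| ≤ 2 ^ k / 2 := by
  have hk : (0 : ℝ) < 2 ^ k := by positivity
  rw [zpow_add_one₀ two_ne_zero, Int.fdiv_eq_ediv_of_nonneg n zero_le_two, abs_le]
  obtain ⟨m, rfl | rfl⟩ : ∃ m, n = 2 * m ∨ n = 2 * m + 1 := ⟨n / 2, by omega⟩
  · rw [show 2 * m / 2 = m by omega]; push_cast; constructor <;> nlinarith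
  · rw [show (2 * m + 1) / 2 = m by omega]; push_cast; constructor <;> nlinarith

lemma abs_dyadicCenter_dyadicParent_sub_le (q : ℤ × ℤ × ℤ) (i : Fin 2) :
    |dyadicCenter (dyadicParent q) i - dyadicCenter q i| ≤ dyadicLen q / 2 := by
  fin_cases i
  · exact abs_fdiv_two_center_sub_le q.2.2 q.1
  · exact abs_fdiv_two_center_sub_le q.2.2 q.2.1

lemma dilate_dyadicParent_two_subset_dilate_five (q : ℤ × ℤ × ℤ) :
    dilate (dyadicParent q) 2 ⊆ dilate q 5 := by
  refine sqC_subset_sqC fun i => ?_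
  rw [dyadicLen_dyadicParent]
  linarith [abs_dyadicCenter_dyadicParent_sub_le q i]

section Lambda0

variable {E : Set E2} {k₀ : ℕ} {C₀ : ℝ}

lemma dyadicLen_lt_of_jetDiam_lt {q : ℤ × ℤ × ℤ} (hq : q ∈ Lambda0 E k₀ C₀) (hC₀ : 0 < C₀)
    {y : E2} (hy : y ∈ dilate q 2) {r : ℝ} (hr : jetDiam y (sigmaSharp E y k₀) < 2 * C₀ * r) :
    dyadicLen q < 2 * r := by
  have := (hq.2.1 y hy).trans_lt hr
  nlinarith

lemma dyadicLen_lt_of_mem_dilate_dyadicParent {q q' : ℤ × ℤ × ℤ} (hq : q ∈ Lambda0 E k₀ C₀)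
    (hq' : q' ∈ Lambda0 E k₀ C₀) (hC₀ : 0 < C₀) {z : E2}
    (hz : z ∈ dilate (dyadicParent q) 2) (hz' : z ∈ dyadicSq q') :
    dyadicLen q' < 8 * dyadicLen q := by
  by_contra! hlarge
  obtain ⟨y, hy, hdiam⟩ := hq.2.2
  have hparent : dilate (dyadicParent q) 2 ⊆ dilate q' 2 := by
    refine sqC_subset_sqC_two_mul_of_mem hz hz' ?_
    rw [dyadicLen_dyadicParent]; linarith
  linarith [dyadicLen_lt_of_jetDiam_lt hq' hC₀ (hparent hy) hdiam, dyadicLen_pos q]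

end Lambda0

/-- (Lemma 7.10 / Lemma on `μ` of the paper.) If `Q ∈ Λ_empty` and
`Q' ∈ Λ^♯` contains a point of `2Q⁺ ∩ E`, then `5Q ∩ Q' ≠ ∅`, `δ_{Q'} ≤ Cδ_Q`, and all
points of `Q` and `Q'` are within distance `Cδ_Q` of each other. -/
theorem empty_square_relay :
    ∀ (k₀ : ℕ) (C₀ : ℝ), 4 ≤ k₀ → 1000 ≤ C₀ →
      ∃ C : ℝ,
        ∀ E : Set E2, E.Finite →
          ∀ q ∈ Lambda0 E k₀ C₀, dyadicLen q < 1 → E ∩ dilate q 2 = ∅ →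
            ∀ q' ∈ LambdaSharp E k₀ C₀,
              (E ∩ dilate (dyadicParent q) 2 ∩ dyadicSq q').Nonempty →
                (dilate q 5 ∩ dyadicSq q').Nonempty ∧
                dyadicLen q' ≤ C * dyadicLen q ∧
                (∀ x ∈ dyadicSq q, ∀ x' ∈ dyadicSq q', dist x x' ≤ C * dyadicLen q) := by
  refine fun k₀ C₀ _ hC₀ => ⟨22, fun E _ q hq _ _ q' hq' ⟨z, ⟨_, hzParent⟩, hzQ'⟩ => ?_⟩
  have hz5 := dilate_dyadicParent_two_subset_dilate_five q hzParent
  have hlen := dyadicLen_lt_of_mem_dilate_dyadicParent hq hq'.1 (by linarith) hzParent hzQ'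
  refine ⟨⟨z, hz5, hzQ'⟩, by linarith [dyadicLen_pos q], fun x hx x' hx' => ?_⟩
  have hcoord : ∀ i, |x i - x' i| ≤ 11 * dyadicLen q := fun i => by
    have hxc := abs_sub_center_le_of_mem_sqC hx i
    have hzc := abs_sub_center_le_of_mem_sqC hz5 i
    have hzx' := abs_sub_lt_of_mem_sqC hzQ' hx' i
    calc |x i - x' i| ≤ |x i - dyadicCenter q i| + |z i - dyadicCenter q i| + |z i - x' i| := by
          linarith [abs_sub_le (x i) (dyadicCenter q i) (z i),
            abs_sub_comm (z i) (dyadicCenter q i), abs_sub_le (x i) (z i) (x' i)]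
      _ ≤ 11 * dyadicLen q := by linarith
  linarith [dist_le_two_mul_of_forall_abs_sub_le hcoord]

end
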